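/- arXiv:2512.18404 — 8 statements merged into one kernel-verified Lean document; each statement's English description precedes it below -/
import Mathlib

section
/- The function Z defined by Z(x) = 2√(-x)·coth(√(-x)/2) for x < 0, Z(0) = 4, and Z(x) = 2√x·cot(√x/2) for 0 < x ≤ π², is a strictly decreasing bijection from (-∞, π²] onto [0, +∞). -/
open Real Set

noncomputable def Zfun : ℝ → ℝ := fun x =>
  if x < 0 then 2 * Real.sqrt (-x) * (Real.cosh (Real.sqrt (-x) / 2) / Real.sinh (Real.sqrt (-x) / 2))
  else if x = 0 then 4
  else 2 * Real.sqrt x * Real.cot (Real.sqrt x / 2)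

/-!
With `s = √(-x) / 2` for `x < 0` and `t = √x / 2` for `x > 0`, `Z x = 4 s coth s`, resp.
`Z x = 4 t cot t`. On `(0, ∞)` the function `s coth s` is strictly increasing and `> 1`; on
`(0, π / 2]` the function `t cot t` is strictly decreasing and `< 1`; both tend to `1` at `0`.
Hence `Z` is continuous and strictly decreasing on `(-∞, π²]`, and since `Z (π²) = 0` while
`Z x ≥ 2 √(-x) → ∞` as `x → -∞`, the intermediate value theorem gives surjectivity onto
`[0, ∞)`.
-/

open Filter Topology

noncomputable def selfMulCoth (s : ℝ) : ℝ := s * (cosh s / sinh s)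

noncomputable def selfMulCot (t : ℝ) : ℝ := t * (cos t / sin t)

section selfMulCoth

variable {s : ℝ}

lemma sinh_lt_mul_cosh (hs : 0 < s) : sinh s < s * cosh s := by
  have hderiv (u : ℝ) : HasDerivAt (fun u => u * cosh u - sinh u) (u * sinh u) u := by
    refine (((hasDerivAt_id u).mul (hasDerivAt_cosh u)).sub (hasDerivAt_sinh u)).congr_deriv ?_
    simp
  have hmono : StrictMonoOn (fun u => u * cosh u - sinh u) (Ici 0) := by
    refine strictMonoOn_of_deriv_pos (convex_Ici 0) (by fun_prop) fun u hu => ?_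
    rw [interior_Ici] at hu
    rw [(hderiv u).deriv]
    exact mul_pos hu (sinh_pos_iff.2 hu)
  simpa using hmono self_mem_Ici hs.le hs

lemma hasDerivAt_selfMulCoth (hs : s ≠ 0) :
    HasDerivAt selfMulCoth ((cosh s * sinh s - s) / sinh s ^ 2) s := by
  have hsinh : sinh s ≠ 0 := sinh_ne_zero.2 hs
  refine ((hasDerivAt_id s).mul ((hasDerivAt_cosh s).div (hasDerivAt_sinh s) hsinh)).congr_deriv ?_
  simp only [Pi.div_apply, id_eq]
  field_simp
  linear_combination -s * cosh_sq_sub_sinh_sq s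

lemma strictMonoOn_selfMulCoth : StrictMonoOn selfMulCoth (Ioi 0) := by
  refine strictMonoOn_of_deriv_pos (convex_Ioi 0)
    (fun s hs => (hasDerivAt_selfMulCoth (ne_of_gt hs)).continuousAt.continuousWithinAt)
    fun s hs => ?_
  rw [interior_Ioi] at hs
  rw [(hasDerivAt_selfMulCoth hs.ne').deriv]
  have hsinh : s < sinh s := self_lt_sinh_iff.2 hs
  have hcosh : sinh s ≤ cosh s * sinh s :=
    le_mul_of_one_le_left (sinh_pos_iff.2 hs).le (one_le_cosh s)
  exact div_pos (by linarith) (pow_pos (sinh_pos_iff.2 hs) 2)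

lemma one_lt_selfMulCoth (hs : 0 < s) : 1 < selfMulCoth s := by
  rw [selfMulCoth, mul_div_assoc', one_lt_div (sinh_pos_iff.2 hs)]
  exact sinh_lt_mul_cosh hs

lemma mul_exp_neg_le_sinh : s * exp (-s) ≤ sinh s := by
  have h := mul_le_mul_of_nonneg_left (add_one_le_exp (2 * s)) (exp_pos (-s)).le
  rw [← exp_add, show -s + 2 * s = s by ring] at h
  rw [sinh_eq]
  linarith

lemma selfMulCoth_le_one_add (hs : 0 < s) : selfMulCoth s ≤ 1 + s := by
  rw [selfMulCoth, mul_div_assoc', div_le_iff₀ (sinh_pos_iff.2 hs)]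
  have hcosh : s * cosh s = s * sinh s + s * exp (-s) := by rw [← cosh_sub_sinh]; ring
  linarith [mul_exp_neg_le_sinh (s := s)]

lemma le_selfMulCoth (hs : 0 < s) : s ≤ selfMulCoth s :=
  le_mul_of_one_le_right hs.le <| (one_le_div (sinh_pos_iff.2 hs)).2 (sinh_lt_cosh s).le

end selfMulCoth

section selfMulCot

variable {t : ℝ}

lemma hasDerivAt_selfMulCot (ht : sin t ≠ 0) :
    HasDerivAt selfMulCot ((cos t * sin t - t) / sin t ^ 2) t := by
  refine ((hasDerivAt_id t).mul ((hasDerivAt_cos t).div (hasDerivAt_sin t) ht)).congr_deriv ?_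
  simp only [Pi.div_apply, id_eq]
  field_simp
  linear_combination -t * sin_sq_add_cos_sq t

lemma strictAntiOn_selfMulCot : StrictAntiOn selfMulCot (Ioo 0 π) := by
  refine strictAntiOn_of_deriv_neg (convex_Ioo 0 π)
    (fun t ht =>
      (hasDerivAt_selfMulCot (sin_pos_of_mem_Ioo ht).ne').continuousAt.continuousWithinAt)
    fun t ht => ?_
  rw [interior_Ioo] at ht
  have hsin : 0 < sin t := sin_pos_of_mem_Ioo ht
  rw [(hasDerivAt_selfMulCot hsin.ne').deriv]
  -- `cos t sin t = sin (2t) / 2 < t`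
  have h2t : sin (2 * t) < 2 * t := sin_lt (by linarith [ht.1])
  rw [sin_two_mul] at h2t
  exact div_neg_of_neg_of_pos (by linarith) (pow_pos hsin 2)

lemma selfMulCot_lt_one (h0 : 0 < t) (hπ : t < π) : selfMulCot t < 1 := by
  have hsin : 0 < sin t := sin_pos_of_pos_of_lt_pi h0 hπ
  rw [selfMulCot, mul_div_assoc', div_lt_one hsin]
  rcases lt_or_ge t (π / 2) with ht | ht
  · have hcos : 0 < cos t := cos_pos_of_mem_Ioo ⟨by linarith, ht⟩
    have htan : t < sin t / cos t := tan_eq_sin_div_cos t ▸ lt_tan h0 ht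
    rwa [lt_div_iff₀ hcos] at htan
  · have hcos : cos t ≤ 0 := cos_nonpos_of_pi_div_two_le_of_le ht (by linarith)
    nlinarith

lemma cos_le_selfMulCot (h0 : 0 < t) (ht : t ≤ π / 2) : cos t ≤ selfMulCot t := by
  have hsin : 0 < sin t := sin_pos_of_pos_of_lt_pi h0 (by linarith [pi_pos])
  have hcos : 0 ≤ cos t := cos_nonneg_of_mem_Icc ⟨by linarith [pi_pos], ht⟩
  rw [selfMulCot, mul_div_assoc', le_div_iff₀ hsin]
  nlinarith [sin_lt h0]

lemma selfMulCot_pi_div_two : selfMulCot (π / 2) = 0 := by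
  simp [selfMulCot]

end selfMulCot

section Zfun

variable {x : ℝ}

lemma Zfun_of_neg (hx : x < 0) : Zfun x = 4 * selfMulCoth (√(-x) / 2) := by
  rw [Zfun, if_pos hx, selfMulCoth]
  ring

lemma Zfun_zero : Zfun 0 = 4 := by
  simp [Zfun]

lemma Zfun_of_pos (hx : 0 < x) : Zfun x = 4 * selfMulCot (√x / 2) := by
  rw [Zfun, if_neg hx.not_gt, if_neg hx.ne', selfMulCot, cot_eq_cos_div_sin]
  ring

lemma sqrt_div_two_pos (hx : 0 < x) : 0 < √x / 2 :=
  half_pos (Real.sqrt_pos.2 hx)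

lemma sqrt_div_two_le_pi_div_two (hx : x ≤ π ^ 2) : √x / 2 ≤ π / 2 := by
  have h := Real.sqrt_le_sqrt hx
  rw [Real.sqrt_sq pi_pos.le] at h
  linarith

lemma sqrt_div_two_lt_pi (hx : x ≤ π ^ 2) : √x / 2 < π := by
  linarith [sqrt_div_two_le_pi_div_two hx, pi_pos]

lemma Zfun_pi_sq : Zfun (π ^ 2) = 0 := by
  rw [Zfun_of_pos (by positivity), Real.sqrt_sq pi_pos.le, selfMulCot_pi_div_two, mul_zero]

lemma four_lt_Zfun_of_neg (hx : x < 0) : 4 < Zfun x := by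
  rw [Zfun_of_neg hx]
  linarith [one_lt_selfMulCoth (sqrt_div_two_pos (neg_pos.2 hx))]

lemma Zfun_le_of_neg (hx : x < 0) : Zfun x ≤ 4 + 2 * √(-x) := by
  rw [Zfun_of_neg hx]
  linarith [selfMulCoth_le_one_add (sqrt_div_two_pos (neg_pos.2 hx))]

lemma two_mul_sqrt_neg_le_Zfun (hx : x < 0) : 2 * √(-x) ≤ Zfun x := by
  rw [Zfun_of_neg hx]
  linarith [le_selfMulCoth (sqrt_div_two_pos (neg_pos.2 hx))]

lemma Zfun_lt_four_of_pos (h0 : 0 < x) (hx : x ≤ π ^ 2) : Zfun x < 4 := by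
  rw [Zfun_of_pos h0]
  linarith [selfMulCot_lt_one (sqrt_div_two_pos h0) (sqrt_div_two_lt_pi hx)]

lemma four_mul_cos_le_Zfun (h0 : 0 < x) (hx : x ≤ π ^ 2) : 4 * cos (√x / 2) ≤ Zfun x := by
  rw [Zfun_of_pos h0]
  linarith [cos_le_selfMulCot (sqrt_div_two_pos h0) (sqrt_div_two_le_pi_div_two hx)]

lemma strictAntiOn_Zfun_Iic_zero : StrictAntiOn Zfun (Iic 0) := by
  intro a ha b hb hab
  rcases (mem_Iic.1 hb).lt_or_eq with hb | rfl
  · have ha : a < 0 := hab.trans hb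
    rw [Zfun_of_neg ha, Zfun_of_neg hb]
    have hsqrt : √(-b) / 2 < √(-a) / 2 := by
      linarith [Real.sqrt_lt_sqrt (by linarith) (neg_lt_neg hab)]
    linarith [strictMonoOn_selfMulCoth (sqrt_div_two_pos (neg_pos.2 hb))
      (sqrt_div_two_pos (neg_pos.2 ha)) hsqrt]
  · exact Zfun_zero ▸ four_lt_Zfun_of_neg hab

lemma strictAntiOn_Zfun_Icc : StrictAntiOn Zfun (Icc 0 (π ^ 2)) := by
  intro a ha b hb hab
  have hb0 : 0 < b := ha.1.trans_lt hab
  rcases ha.1.eq_or_lt with rfl | ha0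
  · exact Zfun_zero ▸ Zfun_lt_four_of_pos hb0 hb.2
  · rw [Zfun_of_pos ha0, Zfun_of_pos hb0]
    have hsqrt : √a / 2 < √b / 2 := by linarith [Real.sqrt_lt_sqrt ha0.le hab]
    linarith [strictAntiOn_selfMulCot ⟨sqrt_div_two_pos ha0, sqrt_div_two_lt_pi ha.2⟩
      ⟨sqrt_div_two_pos hb0, sqrt_div_two_lt_pi hb.2⟩ hsqrt]

lemma strictAntiOn_Zfun : StrictAntiOn Zfun (Iic (π ^ 2)) := by
  rw [← Iic_union_Icc_eq_Iic (by positivity : (0 : ℝ) ≤ π ^ 2)]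
  exact strictAntiOn_Zfun_Iic_zero.union strictAntiOn_Zfun_Icc isGreatest_Iic
    (isLeast_Icc (by positivity))

lemma continuousAt_Zfun_zero : ContinuousAt Zfun 0 := by
  rw [continuousAt_iff_continuous_left'_right', ContinuousWithinAt, ContinuousWithinAt, Zfun_zero]
  constructor
  · have hupper : Tendsto (fun x => 4 + 2 * √(-x)) (𝓝[<] 0) (𝓝 4) :=
      tendsto_nhdsWithin_of_tendsto_nhds <| Continuous.tendsto' (by fun_prop) 0 4 (by simp)
    refine tendsto_of_tendsto_of_tendsto_of_le_of_le' tendsto_const_nhds hupper ?_ ?_ <;>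
      filter_upwards [self_mem_nhdsWithin] with x hx
    exacts [(four_lt_Zfun_of_neg hx).le, Zfun_le_of_neg hx]
  · have hlower : Tendsto (fun x => 4 * cos (√x / 2)) (𝓝[>] 0) (𝓝 4) :=
      tendsto_nhdsWithin_of_tendsto_nhds <| Continuous.tendsto' (by fun_prop) 0 4 (by simp)
    refine tendsto_of_tendsto_of_tendsto_of_le_of_le' hlower tendsto_const_nhds ?_ ?_ <;>
      filter_upwards [Ioc_mem_nhdsGT (by positivity : (0 : ℝ) < π ^ 2)] with x hx
    exacts [four_mul_cos_le_Zfun hx.1 hx.2, (Zfun_lt_four_of_pos hx.1 hx.2).le]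

lemma continuousAt_Zfun (hx : x ≤ π ^ 2) : ContinuousAt Zfun x := by
  rcases lt_trichotomy x 0 with hneg | rfl | hpos
  · have hcont : ContinuousAt (fun y => 4 * selfMulCoth (√(-y) / 2)) x :=
      continuousAt_const.mul <| ContinuousAt.comp (f := fun y => √(-y) / 2)
        (hasDerivAt_selfMulCoth (sqrt_div_two_pos (neg_pos.2 hneg)).ne').continuousAt
        (by fun_prop)
    refine hcont.congr ?_
    filter_upwards [Iio_mem_nhds hneg] with y hy
    exact (Zfun_of_neg hy).symm
  · exact continuousAt_Zfun_zero
  · have hsin : sin (√x / 2) ≠ 0 :=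
      (sin_pos_of_pos_of_lt_pi (sqrt_div_two_pos hpos) (sqrt_div_two_lt_pi hx)).ne'
    have hcont : ContinuousAt (fun y => 4 * selfMulCot (√y / 2)) x :=
      continuousAt_const.mul <| ContinuousAt.comp (f := fun y => √y / 2)
        (hasDerivAt_selfMulCot hsin).continuousAt (by fun_prop)
    refine hcont.congr ?_
    filter_upwards [Ioi_mem_nhds hpos] with y hy
    exact (Zfun_of_pos hy).symm

lemma tendsto_Zfun_atBot : Tendsto Zfun atBot atTop := by
  have hsqrt : Tendsto (fun x : ℝ => 2 * √(-x)) atBot atTop :=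
    (tendsto_sqrt_atTop.comp tendsto_neg_atBot_atTop).const_mul_atTop two_pos
  refine tendsto_atTop_mono' atBot ?_ hsqrt
  filter_upwards [eventually_lt_atBot 0] with x hx
  exact two_mul_sqrt_neg_le_Zfun hx

end Zfun

theorem Zfun_strictAnti_bijOn :
    StrictAntiOn Zfun (Set.Iic (π ^ 2)) ∧
    Set.BijOn Zfun (Set.Iic (π ^ 2)) (Set.Ici (0 : ℝ)) := by
  have hanti := strictAntiOn_Zfun
  refine ⟨hanti, fun x hx => ?_, hanti.injOn, fun y hy => ?_⟩
  · rw [mem_Ici, ← Zfun_pi_sq]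
    exact hanti.antitoneOn hx self_mem_Iic hx
  · obtain ⟨a, hya, ha⟩ :=
      ((tendsto_Zfun_atBot.eventually_ge_atTop y).and (eventually_le_atBot (π ^ 2))).exists
    have hcont : ContinuousOn Zfun (Icc a (π ^ 2)) :=
      fun x hx => (continuousAt_Zfun hx.2).continuousWithinAt
    obtain ⟨x, hx, rfl⟩ := intermediate_value_Icc' ha hcont ⟨by rwa [Zfun_pi_sq], hya⟩
    exact ⟨x, hx.2, rfl⟩
end

section
/- For positive integers m and i with 1 ≤ i ≤ m and real T ∈ (0, i/(m+1)), define W_{i,m}(T) = (2i(m-i+1)π/(1-T))·cot((m-i+1)πT/(2i(1-T))). Then W_{i,m} is a strictly decreasing bijection from (0, i/(m+1)) onto (0, +∞). -/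
/-!
Put `p = (m - i + 1)π / (2i)` and `g T = p T / (1 - T)`. Since `1 / (1 - T) = (p + g T) / p`,
`W T = 4 i² (p + g T) cot (g T)`, where `g` increases from `(0, i / (m + 1))` onto `(0, π / 2)`.
On `(0, π / 2)` the map `x ↦ (p + x) cot x` has derivative
`(sin x cos x - (p + x)) / sin² x < 0`; it is positive, vanishes at `π / 2` and exceeds `y` at `arctan (p / y)`, so by the intermediate
value theorem it maps `(0, π / 2)` onto `(0, ∞)`.
-/

open Real Set

lemma strictMonoOn_mul_div_one_sub {p : ℝ} (hp : 0 < p) :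
    StrictMonoOn (fun T : ℝ => p * T / (1 - T)) (Iio 1) := by
  intro x hx y hy hxy
  rw [div_lt_div_iff₀ (sub_pos.2 hx) (sub_pos.2 hy)]
  nlinarith

lemma bijOn_mul_div_one_sub {p a : ℝ} (hp : 0 < p) (ha : a < 1) :
    BijOn (fun T : ℝ => p * T / (1 - T)) (Ioo 0 a) (Ioo 0 (p * a / (1 - a))) := by
  have hmono := strictMonoOn_mul_div_one_sub hp
  refine ⟨fun T hT => ⟨?_, hmono (hT.2.trans ha) ha hT.2⟩,
    (hmono.mono fun T hT => hT.2.trans ha).injOn, fun y hy => ?_⟩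
  · exact div_pos (mul_pos hp hT.1) (sub_pos.2 (hT.2.trans ha))
  have hpy : 0 < p + y := by linarith [hy.1]
  refine ⟨y / (p + y), ⟨div_pos hy.1 hpy, ?_⟩, ?_⟩
  · have hya := hy.2
    rw [lt_div_iff₀ (sub_pos.2 ha)] at hya
    rw [div_lt_iff₀ hpy]
    linarith
  · have hsub : 1 - y / (p + y) = p / (p + y) := by field_simp; ring
    simp only [hsub]
    field_simp

section AddMulCot

variable {c p : ℝ}

lemma sin_pos_of_mem_Ioc {x : ℝ} (hx : x ∈ Ioc 0 (π / 2)) : 0 < sin x :=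
  sin_pos_of_pos_of_lt_pi hx.1 (by linarith [hx.2, pi_pos])

lemma hasDerivAt_mul_add_mul_cot (c p : ℝ) {x : ℝ} (hx : sin x ≠ 0) :
    HasDerivAt (fun x => c * (p + x) * cot x)
      (c * (sin x * cos x - (p + x)) / sin x ^ 2) x := by
  have h : HasDerivAt (fun x => c * (p + x) * (cos x / sin x)) _ x :=
    (((hasDerivAt_id' x).const_add p).const_mul c).mul
      ((hasDerivAt_cos x).div (hasDerivAt_sin x) hx)
  simp only [cot_eq_cos_div_sin]
  convert h using 1
  field_simp
  linear_combination c * (p + x) * sin_sq_add_cos_sq x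

lemma continuousOn_mul_add_mul_cot (c p : ℝ) :
    ContinuousOn (fun x => c * (p + x) * cot x) (Ioc 0 (π / 2)) := fun _ hx =>
  (hasDerivAt_mul_add_mul_cot c p (sin_pos_of_mem_Ioc hx).ne').continuousAt.continuousWithinAt

lemma strictAntiOn_mul_add_mul_cot (hc : 0 < c) (hp : 0 ≤ p) :
    StrictAntiOn (fun x => c * (p + x) * cot x) (Ioo 0 (π / 2)) := by
  refine strictAntiOn_of_deriv_neg (convex_Ioo 0 (π / 2))
    ((continuousOn_mul_add_mul_cot c p).mono Ioo_subset_Ioc_self) fun x hx => ?_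
  rw [interior_Ioo] at hx
  have hsin := sin_pos_of_mem_Ioc (Ioo_subset_Ioc_self hx)
  rw [(hasDerivAt_mul_add_mul_cot c p hsin.ne').deriv]
  have hlt : sin x * cos x < p + x := by nlinarith [sin_lt hx.1, cos_le_one x]
  exact div_neg_of_neg_of_pos (mul_neg_of_pos_of_neg hc (by linarith)) (by positivity)

lemma mapsTo_mul_add_mul_cot (hc : 0 < c) (hp : 0 ≤ p) :
    MapsTo (fun x => c * (p + x) * cot x) (Ioo 0 (π / 2)) (Ioi 0) := fun x hx => by
  have hsin := sin_pos_of_mem_Ioc (Ioo_subset_Ioc_self hx)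
  have hcos : 0 < cos x := cos_pos_of_mem_Ioo ⟨by linarith [hx.1, pi_pos], hx.2⟩
  have hpx : 0 < p + x := by linarith [hx.1]
  simp only [mem_Ioi, cot_eq_cos_div_sin]
  positivity

lemma surjOn_mul_add_mul_cot (hc : 0 < c) (hp : 0 < p) :
    SurjOn (fun x => c * (p + x) * cot x) (Ioo 0 (π / 2)) (Ioi 0) := by
  intro y (hy : 0 < y)
  set x₀ := arctan (c * p / y)
  have hx₀ : 0 < x₀ := arctan_pos.2 (by positivity)
  have hx₀lt : x₀ < π / 2 := arctan_lt_pi_div_two _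
  have hfx₀ : y < c * (p + x₀) * cot x₀ := by
    rw [← tan_inv_eq_cot, tan_arctan, inv_div, ← mul_div_assoc, lt_div_iff₀ (by positivity)]
    nlinarith [mul_pos hc hx₀]
  have hfπ : c * (p + π / 2) * cot (π / 2) = 0 := by simp [cot_eq_cos_div_sin]
  obtain ⟨x, hx, hfx⟩ := intermediate_value_Ioo' hx₀lt.le
    ((continuousOn_mul_add_mul_cot c p).mono
      ((Icc_subset_Ioc_iff hx₀lt.le).2 ⟨hx₀, le_rfl⟩))
    (show y ∈ Ioo _ _ from ⟨hfπ ▸ hy, hfx₀⟩)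
  exact ⟨x, ⟨hx₀.trans hx.1, hx.2⟩, hfx⟩

lemma bijOn_mul_add_mul_cot (hc : 0 < c) (hp : 0 < p) :
    BijOn (fun x => c * (p + x) * cot x) (Ioo 0 (π / 2)) (Ioi 0) :=
  ⟨mapsTo_mul_add_mul_cot hc hp.le, (strictAntiOn_mul_add_mul_cot hc hp.le).injOn,
    surjOn_mul_add_mul_cot hc hp⟩

end AddMulCot

lemma mul_div_one_sub_mul_cot_eq {k r T : ℝ} (hk : k ≠ 0) (hT : T ≠ 1) :
    4 * k ^ 2 * (r / (2 * k) + r / (2 * k) * T / (1 - T)) * cot (r / (2 * k) * T / (1 - T)) =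
      2 * k * r / (1 - T) * cot (r * T / (2 * k * (1 - T))) := by
  have hT' : 1 - T ≠ 0 := sub_ne_zero.2 hT.symm
  congr 1
  · field_simp
    ring
  · field_simp

theorem W_strictAnti_bijOn (m i : ℕ) (hi1 : 1 ≤ i) (him : i ≤ m) :
    StrictAntiOn
      (fun T : ℝ => (2 * i * ((m : ℝ) - i + 1) * π / (1 - T)) *
        Real.cot (((m : ℝ) - i + 1) * π * T / (2 * i * (1 - T))))
      (Set.Ioo 0 ((i : ℝ) / (m + 1))) ∧
    Set.BijOn
      (fun T : ℝ => (2 * i * ((m : ℝ) - i + 1) * π / (1 - T)) *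
        Real.cot (((m : ℝ) - i + 1) * π * T / (2 * i * (1 - T))))
      (Set.Ioo 0 ((i : ℝ) / (m + 1))) (Set.Ioi (0 : ℝ)) := by
  have hi : (0 : ℝ) < i := by exact_mod_cast hi1
  have hmi : (0 : ℝ) < m - i + 1 := by linarith [(Nat.cast_le (α := ℝ)).2 him]
  set p : ℝ := (m - i + 1) * π / (2 * i)
  set a : ℝ := i / (m + 1)
  have hp : 0 < p := by positivity
  have ha : a < 1 := (div_lt_one (by linarith)).2 (by linarith)
  have hpa : p * a / (1 - a) = π / 2 := by
    rw [div_eq_iff (sub_pos.2 ha).ne']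
    simp only [p, a]
    field_simp
    ring
  have hg := bijOn_mul_div_one_sub hp ha
  rw [hpa] at hg
  have hW : EqOn ((fun x => 4 * (i : ℝ) ^ 2 * (p + x) * cot x) ∘ (fun T => p * T / (1 - T)))
      (fun T : ℝ => (2 * i * ((m : ℝ) - i + 1) * π / (1 - T)) *
        Real.cot (((m : ℝ) - i + 1) * π * T / (2 * i * (1 - T)))) (Ioo 0 a) := fun T hT =>
    (mul_div_one_sub_mul_cot_eq hi.ne' (hT.2.trans ha).ne).trans (by rw [← mul_assoc])
  refine ⟨((strictAntiOn_mul_add_mul_cot (by positivity) hp.le).comp_strictMonoOn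
    ((strictMonoOn_mul_div_one_sub hp).mono fun T hT => hT.2.trans ha) hg.mapsTo).congr hW,
    ((bijOn_mul_add_mul_cot (by positivity) hp).comp hg).congr hW⟩
end

section
/- For any constant π̃ > 0, the function H(t) = (t + cot t + π̃)² - (2t + t·cot²t)² is strictly decreasing on (0, π/2); in particular H'(t) < 0 for all t ∈ (0, π/2). -/
/-!
With `k = cot t` we have `k' = -(1 + k²)`, so `H'(t) = -2 (p̃ k² + G(t, k))` where
`G = 2t(2 + k²)(1 + k²)(1 - tk) - k²(t(1 + k²) - k)`. Both terms of `G` behave like `2/(3t)`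
as `t → 0`, so third-order bounds are needed: `tan t ≥ t + t³/3` gives `1 - tk ≥ t³k/3`, and
`t - 2t³/3 ≤ sin t cos t = k/(1 + k²) ≤ t` (from `sin u ≥ u - u³/6` at `u = 2t`) gives
`t(1 + k²) - k ≤ 2t³(1 + k²)/3`. Together `G ≥ 2t³k(1 + k²)(t(2 + k²) - k)/3 ≥ 0`.
-/

open Real Set

namespace Real

theorem hasDerivAt_cot {x : ℝ} (hx : sin x ≠ 0) : HasDerivAt cot (-(1 + cot x ^ 2)) x := by
  rw [show cot = fun y => cos y / sin y from funext cot_eq_cos_div_sin]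
  refine ((hasDerivAt_cos x).div (hasDerivAt_sin x) hx).congr_deriv ?_
  field_simp
  ring

theorem add_cube_div_three_le_tan {x : ℝ} (hx₀ : 0 ≤ x) (hx : x < π / 2) :
    x + x ^ 3 / 3 ≤ tan x := by
  have hcos : ∀ y ∈ Ico 0 (π / 2), cos y ≠ 0 := fun y hy =>
    (cos_pos_of_mem_Ioo ⟨by linarith [hy.1, pi_pos], hy.2⟩).ne'
  have hmono : MonotoneOn (fun y => tan y - y - y ^ 3 / 3) (Ico 0 (π / 2)) := by
    refine monotoneOn_of_hasDerivWithinAt_nonneg (f' := fun y => tan y ^ 2 - y ^ 2)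
      (convex_Ico _ _) ?_ (fun y hy => ?_) (fun y hy => ?_)
    · exact ((continuousOn_tan.mono hcos).sub continuousOn_id).sub (by fun_prop)
    · rw [interior_Ico] at hy ⊢
      have hc := hcos y (Ioo_subset_Ico_self hy)
      refine ((((hasDerivAt_tan hc).sub (hasDerivAt_id y)).sub
        ((hasDerivAt_pow 3 y).div_const 3)).congr_deriv ?_).hasDerivWithinAt
      rw [one_div, ← inv_one_add_tan_sq hc, inv_inv]
      ring
    · rw [interior_Ico] at hy
      have := le_tan hy.1.le hy.2
      nlinarith [hy.1]
  have := hmono ⟨le_rfl, pi_div_two_pos⟩ ⟨hx₀, hx⟩ hx₀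
  simp only [tan_zero] at this
  linarith

theorem sin_mul_cos_le {x : ℝ} (hx : 0 ≤ x) : sin x * cos x ≤ x := by
  linarith [sin_two_mul x, sin_le (by linarith : 0 ≤ 2 * x)]

theorem sub_le_sin_mul_cos {x : ℝ} (hx : 0 ≤ x) : x - 2 * x ^ 3 / 3 ≤ sin x * cos x := by
  linarith [sin_two_mul x, sin_ge_sub_cube (by linarith : 0 ≤ 2 * x)]

theorem cot_eq_sin_mul_cos_mul {x : ℝ} (hx : sin x ≠ 0) :
    cot x = sin x * cos x * (1 + cot x ^ 2) := by
  rw [cot_eq_cos_div_sin]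
  field_simp
  linear_combination (-cos x) * sin_sq_add_cos_sq x

theorem sub_mul_one_add_cot_sq_le_cot {x : ℝ} (hx₀ : 0 ≤ x) (hx : sin x ≠ 0) :
    (x - 2 * x ^ 3 / 3) * (1 + cot x ^ 2) ≤ cot x := by
  calc (x - 2 * x ^ 3 / 3) * (1 + cot x ^ 2) ≤ sin x * cos x * (1 + cot x ^ 2) := by
        gcongr
        exact sub_le_sin_mul_cos hx₀
    _ = cot x := (cot_eq_sin_mul_cos_mul hx).symm

theorem cot_le_mul_one_add_cot_sq {x : ℝ} (hx₀ : 0 ≤ x) (hx : sin x ≠ 0) :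
    cot x ≤ x * (1 + cot x ^ 2) := by
  calc cot x = sin x * cos x * (1 + cot x ^ 2) := cot_eq_sin_mul_cos_mul hx
    _ ≤ x * (1 + cot x ^ 2) := by
        gcongr
        exact sin_mul_cos_le hx₀

theorem cot_pos_of_mem_Ioo {x : ℝ} (hx : x ∈ Ioo 0 (π / 2)) : 0 < cot x := by
  rw [cot_eq_cos_div_sin]
  exact div_pos (cos_pos_of_mem_Ioo ⟨by linarith [hx.1, pi_pos], hx.2⟩)
    (sin_pos_of_pos_of_lt_pi hx.1 (by linarith [hx.2, pi_pos]))

theorem add_cube_div_three_mul_cot_le_one {x : ℝ} (hx : x ∈ Ioo 0 (π / 2)) :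
    (x + x ^ 3 / 3) * cot x ≤ 1 :=
  calc (x + x ^ 3 / 3) * cot x ≤ tan x * cot x := by
        gcongr
        · exact (cot_pos_of_mem_Ioo hx).le
        · exact add_cube_div_three_le_tan hx.1.le hx.2
    _ = 1 := by
        have hc : cos x ≠ 0 := (cos_pos_of_mem_Ioo ⟨by linarith [hx.1, pi_pos], hx.2⟩).ne'
        have hs : sin x ≠ 0 := (sin_pos_of_pos_of_lt_pi hx.1 (by linarith [hx.2, pi_pos])).ne'
        rw [tan_eq_sin_div_cos, cot_eq_cos_div_sin]
        field_simp

end Real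

theorem hasDerivAt_H (p : ℝ) {t : ℝ} (ht : sin t ≠ 0) :
    HasDerivAt (fun t : ℝ => (t + cot t + p) ^ 2 - (2 * t + t * cot t ^ 2) ^ 2)
      (-2 * (p * cot t ^ 2 + cot t ^ 2 * (t + cot t) +
        t * (2 + cot t ^ 2) * (2 + cot t ^ 2 - 2 * t * cot t * (1 + cot t ^ 2)))) t := by
  have hcot := hasDerivAt_cot ht
  have h₁ := (((hasDerivAt_id t).add hcot).add_const p).pow 2
  have h₂ := (((hasDerivAt_id t).const_mul 2).add ((hasDerivAt_id t).mul (hcot.pow 2))).pow 2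
  refine (h₁.sub h₂).congr_deriv ?_
  simp only [id, Pi.add_apply, Pi.mul_apply, Pi.pow_apply, Nat.cast_ofNat]
  ring

theorem pos_of_cot_bounds {p t k : ℝ} (hp : 0 < p) (ht : 0 < t) (hk : 0 < k)
    (htan : (t + t ^ 3 / 3) * k ≤ 1) (hlow : (t - 2 * t ^ 3 / 3) * (1 + k ^ 2) ≤ k)
    (hup : k ≤ t * (1 + k ^ 2)) :
    0 < p * k ^ 2 + k ^ 2 * (t + k) + t * (2 + k ^ 2) * (2 + k ^ 2 - 2 * t * k * (1 + k ^ 2)) := by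
  have h₁ : t ^ 3 * k / 3 ≤ 1 - t * k := by linarith
  have h₂ : t * (1 + k ^ 2) - k ≤ 2 * t ^ 3 / 3 * (1 + k ^ 2) := by linarith
  have h₃ : 0 ≤ t * (2 + k ^ 2) - k := by linarith
  calc 0 < p * k ^ 2 + 2 * t ^ 3 / 3 * k * (1 + k ^ 2) * (t * (2 + k ^ 2) - k) :=
        add_pos_of_pos_of_nonneg (by positivity) (mul_nonneg (by positivity) h₃)
    _ ≤ p * k ^ 2 + 2 * t * (2 + k ^ 2) * (1 + k ^ 2) * (1 - t * k) -
          k ^ 2 * (t * (1 + k ^ 2) - k) := by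
        nlinarith [mul_le_mul_of_nonneg_left h₁ (by positivity : 0 ≤ 2 * t * (2 + k ^ 2) * (1 + k ^ 2)),
          mul_le_mul_of_nonneg_left h₂ (sq_nonneg k)]
    _ = _ := by ring

theorem H_strictAnti (pit : ℝ) (hpit : 0 < pit) :
    StrictAntiOn
      (fun t : ℝ => (t + Real.cot t + pit) ^ 2 - (2 * t + t * Real.cot t ^ 2) ^ 2)
      (Set.Ioo 0 (π / 2)) ∧
    ∀ t ∈ Set.Ioo (0 : ℝ) (π / 2),
      deriv (fun t : ℝ => (t + Real.cot t + pit) ^ 2 - (2 * t + t * Real.cot t ^ 2) ^ 2) t < 0 := by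
  have hsin : ∀ t ∈ Ioo 0 (π / 2), 0 < sin t := fun t ht =>
    sin_pos_of_pos_of_lt_pi ht.1 (by linarith [ht.2, pi_pos])
  have hderiv : ∀ t ∈ Ioo 0 (π / 2),
      deriv (fun t : ℝ => (t + cot t + pit) ^ 2 - (2 * t + t * cot t ^ 2) ^ 2) t < 0 := by
    intro t ht
    have hs := (hsin t ht).ne'
    rw [(hasDerivAt_H pit hs).deriv]
    have := pos_of_cot_bounds hpit ht.1 (cot_pos_of_mem_Ioo ht)
      (add_cube_div_three_mul_cot_le_one ht) (sub_mul_one_add_cot_sq_le_cot ht.1.le hs)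
      (cot_le_mul_one_add_cot_sq ht.1.le hs)
    linarith
  refine ⟨strictAntiOn_of_deriv_neg (convex_Ioo _ _) (fun t ht => ?_) (by rwa [interior_Ioo]),
    hderiv⟩
  exact (hasDerivAt_H pit (hsin t ht).ne').continuousAt.continuousWithinAt
end

section
/- For any constant π̃ ∈ ℝ, the function g(t) = -cot t + 2t²·cot t/sin²t - t/sin²t + π̃ has derivative g'(t) = (t/sin⁴t)·(3·sin(2t) - 2t - 4t·cos²t), which is negative for all t ∈ (0, π/2); hence g is strictly decreasing on (0, π/2). -/
open Real Set

/-!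
Put `u = 2t`. Since `4t cos² t = 2t + u cos u`, the bracket in `g'` is
`φ(u) = 3 sin u - 2u - u cos u`. The functions `φ`, `φ' = 2 cos u - 2 + u sin u` and
`φ'' = u cos u - sin u` all vanish at `0`, and `φ''' = -u sin u < 0` on `(0, π)`; three
monotonicity steps give `φ < 0` on `(0, π)`, and `t / sin⁴ t > 0`.
-/

noncomputable def g (c t : ℝ) : ℝ :=
  -cot t + 2 * t ^ 2 * cot t / sin t ^ 2 - t / sin t ^ 2 + c

lemma neg_of_hasDerivAt_neg {f f' : ℝ → ℝ} {a b x : ℝ} (hf : ∀ y, HasDerivAt f (f' y) y)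
    (ha : f a = 0) (hf' : ∀ y ∈ Ioo a b, f' y < 0) (hx : x ∈ Ioo a b) : f x < 0 := by
  have hanti : StrictAntiOn f (Icc a b) :=
    strictAntiOn_of_hasDerivWithinAt_neg (convex_Icc a b)
      (fun y _ => (hf y).continuousAt.continuousWithinAt) (fun y _ => (hf y).hasDerivWithinAt)
      (by rwa [interior_Icc])
  simpa [ha] using hanti (left_mem_Icc.2 (hx.1.trans hx.2).le) (Ioo_subset_Icc_self hx) hx.1

lemma mul_cos_sub_sin_neg {u : ℝ} (hu : u ∈ Ioo 0 π) : u * cos u - sin u < 0 := by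
  refine neg_of_hasDerivAt_neg (f := fun x => x * cos x - sin x) (f' := fun x => -(x * sin x))
    (fun x => ?_) (by simp)
    (fun x hx => neg_neg_of_pos (mul_pos hx.1 (sin_pos_of_mem_Ioo hx))) hu
  refine (((hasDerivAt_id x).mul (hasDerivAt_cos x)).sub (hasDerivAt_sin x)).congr_deriv ?_
  simp only [id]
  ring

lemma two_mul_cos_sub_two_add_mul_sin_neg {u : ℝ} (hu : u ∈ Ioo 0 π) :
    2 * cos u - 2 + u * sin u < 0 := by
  refine neg_of_hasDerivAt_neg (f := fun x => 2 * cos x - 2 + x * sin x) (fun x => ?_) (by simp)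
    (fun x hx => mul_cos_sub_sin_neg hx) hu
  refine ((((hasDerivAt_cos x).const_mul 2).sub_const 2).add
    ((hasDerivAt_id x).mul (hasDerivAt_sin x))).congr_deriv ?_
  simp only [id]
  ring

lemma three_mul_sin_sub_two_mul_sub_mul_cos_neg {u : ℝ} (hu : u ∈ Ioo 0 π) :
    3 * sin u - 2 * u - u * cos u < 0 := by
  refine neg_of_hasDerivAt_neg (f := fun x => 3 * sin x - 2 * x - x * cos x) (fun x => ?_)
    (by simp) (fun x hx => two_mul_cos_sub_two_add_mul_sin_neg hx) hu
  refine ((((hasDerivAt_sin x).const_mul 3).sub ((hasDerivAt_id x).const_mul 2)).sub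
    ((hasDerivAt_id x).mul (hasDerivAt_cos x))).congr_deriv ?_
  simp only [id]
  ring

lemma Real.hasDerivAt_cot_s8 {x : ℝ} (hx : sin x ≠ 0) : HasDerivAt cot (-1 / sin x ^ 2) x := by
  rw [show cot = fun y => cos y / sin y from funext cot_eq_cos_div_sin]
  refine ((hasDerivAt_cos x).div (hasDerivAt_sin x) hx).congr_deriv ?_
  rw [← sin_sq_add_cos_sq x]
  ring

lemma hasDerivAt_g (c : ℝ) {t : ℝ} (ht : sin t ≠ 0) :
    HasDerivAt (g c)
      (t / sin t ^ 4 * (3 * sin (2 * t) - 2 * t - 4 * t * cos t ^ 2)) t := by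
  have hsq : HasDerivAt (fun x => sin x ^ 2) (2 * sin t * cos t) t := by
    refine ((hasDerivAt_sin t).pow 2).congr_deriv ?_
    ring
  have hsq0 : sin t ^ 2 ≠ 0 := pow_ne_zero 2 ht
  have hcot := hasDerivAt_cot_s8 ht
  have h := (((hcot.neg.add ((((hasDerivAt_pow 2 t).const_mul 2).mul hcot).div hsq hsq0)).sub
    ((hasDerivAt_id t).div hsq hsq0)).add_const c)
  refine h.congr_deriv ?_
  simp only [Pi.mul_apply, id, Nat.cast_ofNat, Nat.add_one_sub_one, pow_one, sin_two_mul,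
    cot_eq_cos_div_sin]
  field_simp
  ring

lemma g_deriv_neg_of_mem_Ioo {t : ℝ} (ht : t ∈ Ioo 0 (π / 2)) :
    t / sin t ^ 4 * (3 * sin (2 * t) - 2 * t - 4 * t * cos t ^ 2) < 0 := by
  have hsin : 0 < sin t := sin_pos_of_pos_of_lt_pi ht.1 (by linarith [pi_pos, ht.2])
  have h := three_mul_sin_sub_two_mul_sub_mul_cos_neg (u := 2 * t)
    ⟨by linarith [ht.1], by linarith [ht.2]⟩
  rw [cos_two_mul] at h
  exact mul_neg_of_pos_of_neg (div_pos ht.1 (by positivity)) (by linarith)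

theorem g_deriv_neg (pit : ℝ) :
    (∀ t ∈ Set.Ioo (0 : ℝ) (π / 2),
      HasDerivAt
        (fun t : ℝ => -Real.cot t + 2 * t ^ 2 * Real.cot t / Real.sin t ^ 2
          - t / Real.sin t ^ 2 + pit)
        (t / Real.sin t ^ 4 * (3 * Real.sin (2 * t) - 2 * t - 4 * t * Real.cos t ^ 2)) t ∧
      t / Real.sin t ^ 4 * (3 * Real.sin (2 * t) - 2 * t - 4 * t * Real.cos t ^ 2) < 0) ∧
    StrictAntiOn
      (fun t : ℝ => -Real.cot t + 2 * t ^ 2 * Real.cot t / Real.sin t ^ 2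
        - t / Real.sin t ^ 2 + pit)
      (Set.Ioo 0 (π / 2)) := by
  have hderiv : ∀ t ∈ Ioo (0 : ℝ) (π / 2), HasDerivAt (g pit)
      (t / sin t ^ 4 * (3 * sin (2 * t) - 2 * t - 4 * t * cos t ^ 2)) t := fun t ht =>
    hasDerivAt_g pit (sin_pos_of_pos_of_lt_pi ht.1 (by linarith [pi_pos, ht.2])).ne'
  refine ⟨fun t ht => ⟨hderiv t ht, g_deriv_neg_of_mem_Ioo ht⟩, ?_⟩
  show StrictAntiOn (g pit) _
  refine strictAntiOn_of_hasDerivWithinAt_neg (convex_Ioo 0 (π / 2))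
    (f' := fun t => t / sin t ^ 4 * (3 * sin (2 * t) - 2 * t - 4 * t * cos t ^ 2))
    (fun t ht => (hderiv t ht).continuousAt.continuousWithinAt) (fun t ht => ?_) ?_
  · rw [interior_Ioo] at ht ⊢
    exact (hderiv t ht).hasDerivWithinAt
  · rw [interior_Ioo]
    exact fun t ht => g_deriv_neg_of_mem_Ioo ht
end

section
/- For all t ∈ (0, π/2), 3·sin(2t) - 2t - 4t·cos²t < 0. -/
/-!
With `x = 2t` and `4 cos² t = 2 (1 + cos x)`, the claim is the Cusa–Huygens inequality
`3 sin x < x (2 + cos x)` on `(0, π]`. Its defect `f x = x (2 + cos x) - 3 sin x` vanishes to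
third order at `0`, with `f''' x = x sin x > 0` on `(0, π)`; integrating three times from `0`
gives `f > 0`.
-/

open Real Set

lemma pos_of_hasDerivAt_pos_of_eq_zero {f f' : ℝ → ℝ} {a b x : ℝ}
    (hf : ∀ y, HasDerivAt f (f' y) y) (ha : f a = 0) (hf' : ∀ y ∈ Ioo a b, 0 < f' y)
    (hx : x ∈ Ioc a b) : 0 < f x := by
  have hmono : StrictMonoOn f (Icc a b) :=
    strictMonoOn_of_hasDerivWithinAt_pos (convex_Icc a b)
      (fun y _ => (hf y).continuousAt.continuousWithinAt)
      (fun y _ => (hf y).hasDerivWithinAt)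
      (fun y hy => hf' y (by rwa [interior_Icc] at hy))
  have hab : a ≤ b := hx.1.le.trans hx.2
  simpa [ha] using hmono (left_mem_Icc.2 hab) (Ioc_subset_Icc_self hx) hx.1

lemma mul_cos_lt_sin {x : ℝ} (hx : x ∈ Ioc 0 π) : x * cos x < sin x := by
  have hderiv : ∀ y, HasDerivAt (fun y => sin y - y * cos y) (y * sin y) y := fun y =>
    ((hasDerivAt_sin y).sub ((hasDerivAt_id' y).mul (hasDerivAt_cos y))).congr_deriv (by ring)
  have := pos_of_hasDerivAt_pos_of_eq_zero hderiv (by simp)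
    (fun y hy => mul_pos hy.1 (sin_pos_of_pos_of_lt_pi hy.1 hy.2)) hx
  linarith

lemma mul_sin_lt_two_sub_two_mul_cos {x : ℝ} (hx : x ∈ Ioc 0 π) :
    x * sin x < 2 - 2 * cos x := by
  have hderiv : ∀ y, HasDerivAt (fun y => 2 - 2 * cos y - y * sin y) (sin y - y * cos y) y :=
    fun y => ((((hasDerivAt_cos y).const_mul 2).const_sub 2).sub
      ((hasDerivAt_id' y).mul (hasDerivAt_sin y))).congr_deriv (by ring)
  have := pos_of_hasDerivAt_pos_of_eq_zero hderiv (by simp)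
    (fun y hy => sub_pos.2 (mul_cos_lt_sin (Ioo_subset_Ioc_self hy))) hx
  linarith

lemma three_mul_sin_lt_mul_two_add_cos {x : ℝ} (hx : x ∈ Ioc 0 π) :
    3 * sin x < x * (2 + cos x) := by
  have hderiv : ∀ y, HasDerivAt (fun y => y * (2 + cos y) - 3 * sin y)
      (2 - 2 * cos y - y * sin y) y := fun y =>
    (((hasDerivAt_id' y).mul ((hasDerivAt_cos y).const_add 2)).sub
      ((hasDerivAt_sin y).const_mul 3)).congr_deriv (by ring)
  have := pos_of_hasDerivAt_pos_of_eq_zero hderiv (by simp)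
    (fun y hy => sub_pos.2 (mul_sin_lt_two_sub_two_mul_cos (Ioo_subset_Ioc_self hy))) hx
  linarith

theorem sin_ineq (t : ℝ) (ht : t ∈ Set.Ioo 0 (π / 2)) :
    3 * Real.sin (2 * t) - 2 * t - 4 * t * Real.cos t ^ 2 < 0 := by
  have h : 3 * sin (2 * t) < 2 * t * (2 + cos (2 * t)) :=
    three_mul_sin_lt_mul_two_add_cos ⟨by linarith [ht.1], by linarith [ht.2]⟩
  rw [cos_two_mul] at h
  linarith
end

section
/- For all t ∈ (0, π/2), the inequality -(1/2)·sin(2t) - t + 2t²·cot t < 0 holds. -/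
/-!
Multiplying by `tan t > 0`, the claim becomes `2 t² < sin² t + t tan t`. With
`sin t > t - t³/6` and `tan t > t + t³/3` the right side exceeds `2 t² + t⁶/36`:
the quartic terms cancel.
-/

open Real

/-- The derivative of `tan y - y - y³/3` is `tan² y - y²`, positive by `y < tan y`. -/
theorem Real.add_cube_div_three_lt_tan {x : ℝ} (h0 : 0 < x) (h1 : x < π / 2) :
    x + x ^ 3 / 3 < tan x := by
  have hcos_pos {y : ℝ} (hy : y ∈ Set.Ico 0 (π / 2)) : 0 < cos y :=
    cos_pos_of_mem_Ioo ⟨by linarith [hy.1, pi_pos], hy.2⟩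
  have hcont : ContinuousOn (fun y ↦ tan y - y - y ^ 3 / 3) (Set.Ico 0 (π / 2)) :=
    ((continuousOn_tan.mono fun y hy ↦ (hcos_pos hy).ne').sub continuousOn_id).sub
      (by fun_prop)
  have hderiv : ∀ y ∈ interior (Set.Ico 0 (π / 2)),
      0 < deriv (fun y ↦ tan y - y - y ^ 3 / 3) y := by
    intro y hy
    rw [interior_Ico] at hy
    have hcos : cos y ≠ 0 := (hcos_pos (Set.Ioo_subset_Ico_self hy)).ne'
    have hd : HasDerivAt (fun y ↦ tan y - y - y ^ 3 / 3) (1 / cos y ^ 2 - 1 - y ^ 2) y := by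
      refine (((hasDerivAt_tan hcos).sub (hasDerivAt_id y)).sub
        ((hasDerivAt_pow 3 y).div_const 3)).congr_deriv ?_
      push_cast
      ring
    have htan : 1 / cos y ^ 2 - 1 = tan y ^ 2 := by
      rw [← inv_one_add_tan_sq hcos, one_div, inv_inv, add_sub_cancel_left]
    rw [hd.deriv, htan, sub_pos]
    exact pow_lt_pow_left₀ (lt_tan hy.1 hy.2) hy.1.le two_ne_zero
  have := strictMonoOn_of_deriv_pos (convex_Ico 0 (π / 2)) hcont hderiv
    ⟨le_rfl, by positivity⟩ ⟨h0.le, h1⟩ h0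
  simp only [tan_zero, sub_zero, zero_pow three_ne_zero, zero_div] at this
  linarith

theorem Real.two_mul_sq_lt_sin_sq_add_mul_tan {t : ℝ} (h0 : 0 < t) (h1 : t < π / 2) :
    2 * t ^ 2 < sin t ^ 2 + t * tan t := by
  have hsin : t - t ^ 3 / 6 < sin t := sin_gt_sub_cube h0
  have htan : t + t ^ 3 / 3 < tan t := add_cube_div_three_lt_tan h0 h1
  have hsq_lt_six : t ^ 2 < 6 := by nlinarith [pi_lt_four]
  have hcubic_pos : 0 < t - t ^ 3 / 6 := by nlinarith [mul_pos h0 (sub_pos.mpr hsq_lt_six)]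
  have hsin_sq : (t - t ^ 3 / 6) ^ 2 < sin t ^ 2 :=
    pow_lt_pow_left₀ hsin hcubic_pos.le two_ne_zero
  nlinarith [mul_lt_mul_of_pos_left htan h0, pow_pos h0 6]

theorem sin_cot_ineq (t : ℝ) (ht : t ∈ Set.Ioo 0 (π / 2)) :
    -(1 / 2) * Real.sin (2 * t) - t + 2 * t ^ 2 * Real.cot t < 0 := by
  obtain ⟨h0, h1⟩ := ht
  have hsin : 0 < sin t := sin_pos_of_pos_of_lt_pi h0 (by linarith [pi_pos])
  have hcos : 0 < cos t := cos_pos_of_mem_Ioo ⟨by linarith, h1⟩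
  have hfactor : -(1 / 2) * sin (2 * t) - t + 2 * t ^ 2 * cot t
      = cos t / sin t * (2 * t ^ 2 - (sin t ^ 2 + t * tan t)) := by
    rw [cot_eq_cos_div_sin, tan_eq_sin_div_cos, sin_two_mul]
    field_simp
    ring
  rw [hfactor]
  exact mul_neg_of_pos_of_neg (div_pos hcos hsin)
    (sub_neg.mpr (two_mul_sq_lt_sin_sq_add_mul_tan h0 h1))
end

section
/- Let r > 0, i² > 0, π̃ > 0 and t ∈ (0, π/2]. If r̂ and T satisfy T·r̂ = 4i²·t·cot t and T = 2t/(t + π̃ + √((t+π̃)² + (r - r̂)/i²)), then r̂ = 2i²·cot t·(t - cot t + π̃ + √((t - cot t + π̃)² + r/i²)). -/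
/-! Clearing the denominator in the formula for `T` turns the first equation into the implicit
relation `r̂ = 2 i² cot t (t + π̃ + s)` with `s = √((t + π̃)² + (r - r̂)/i²)`. Substituting it back
into `r / i²` shows that `(t - cot t + π̃)² + r / i²` is the perfect square `(s + cot t)²`, and
`s + cot t ≥ 0` because `cot t ≥ 0` on `(0, π/2]`. -/

open Real

lemma Real.cot_nonneg_of_mem_Ioc {t : ℝ} (ht : t ∈ Set.Ioc 0 (π / 2)) : 0 ≤ cot t := by
  rw [cot_eq_cos_div_sin]
  exact div_nonneg (cos_nonneg_of_mem_Icc ⟨by linarith [pi_pos, ht.1], ht.2⟩)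
    (sin_pos_of_pos_of_lt_pi ht.1 (by linarith [pi_pos, ht.2])).le

lemma eq_of_eq_mul_add_sqrt {a c k x y : ℝ} (hk : 0 < k) (hc : 0 ≤ c) (hxy : x ≤ y)
    (hx : x = 2 * k * c * (a + √(a ^ 2 + (y - x) / k))) :
    x = 2 * k * c * (a - c + √((a - c) ^ 2 + y / k)) := by
  set s := √(a ^ 2 + (y - x) / k)
  have hs_sq : s ^ 2 = a ^ 2 + (y - x) / k :=
    sq_sqrt (add_nonneg (sq_nonneg a) (div_nonneg (sub_nonneg.2 hxy) hk.le))
  have hsquare : (a - c) ^ 2 + y / k = (s + c) ^ 2 := by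
    have hy : y / k = (y - x) / k + 2 * c * (a + s) := by
      rw [sub_div, hx]; field_simp; ring
    rw [hy]
    linear_combination -hs_sq
  rw [hsquare, sqrt_sq (add_nonneg (sqrt_nonneg _) hc)]
  linear_combination hx

theorem rhat_formula_general (r i pit t rhat T : ℝ)
    (hi : 0 < i) (hpit : 0 < pit)
    (ht : t ∈ Set.Ioc 0 (π / 2))
    (hrhat : rhat ∈ Set.Icc 0 r)
    (h1 : T * rhat = 4 * i ^ 2 * t * Real.cot t)
    (h2 : T = 2 * t / (t + pit + Real.sqrt ((t + pit) ^ 2 + (r - rhat) / i ^ 2))) :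
    rhat = 2 * i ^ 2 * Real.cot t *
      (t - Real.cot t + pit + Real.sqrt ((t - Real.cot t + pit) ^ 2 + r / i ^ 2)) := by
  set s := √((t + pit) ^ 2 + (r - rhat) / i ^ 2)
  have hden : 0 < t + pit + s := by positivity [ht.1]
  have himplicit : rhat = 2 * i ^ 2 * cot t * (t + pit + s) := by
    rw [h2, div_mul_eq_mul_div, div_eq_iff hden.ne'] at h1
    exact mul_left_cancel₀ (by positivity [ht.1] : (2 * t : ℝ) ≠ 0) (by linear_combination h1)
  convert eq_of_eq_mul_add_sqrt (by positivity) (cot_nonneg_of_mem_Ioc ht) hrhat.2 himplicit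
    using 4 <;> ring

theorem rhat_formula (r i pit t rhat T : ℝ)
    (hr : 0 < r) (hi : 0 < i) (hpit : 0 < pit)
    (ht : t ∈ Set.Ioc 0 (π / 2))
    (hrhat : rhat ∈ Set.Icc 0 r) (hT : T ∈ Set.Ioo (0 : ℝ) 1)
    (h1 : T * rhat = 4 * i ^ 2 * t * Real.cot t)
    (h2 : T = 2 * t / (t + pit + Real.sqrt ((t + pit) ^ 2 + (r - rhat) / i ^ 2))) :
    rhat = 2 * i ^ 2 * Real.cot t *
      (t - Real.cot t + pit + Real.sqrt ((t - Real.cot t + pit) ^ 2 + r / i ^ 2)) :=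
  rhat_formula_general r i pit t rhat T hi hpit ht hrhat h1 h2
end

section
/- Let u ∈ (0, 0.36) and set v = uπ/(u - π/2 + √((u + π/2)² + 3.6)). Then F(u,v) = 4v²(u+v) - 2v²·sin(2v) - uπ²·sin²v satisfies F(u,v) < 0. -/
/-!
The Taylor bound `sin x > x - x³/6`, applied to `sin v` and `sin 2v`, gives
`F(u, v) < v² (8v³/3 - u D(v))` with `D(v) = π² (1 - v²/6)² - 4`. Clearing the square root, the
point `(u, v)` lies on the conic `u π (π - 2v) (u + v) = 3.6 v²`, whose left side increases in
`u > 0`. Hence `u > 8v³/(3 D(v))` as soon as that left side at `8v³/(3 D(v))` is below `3.6 v²`,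
a polynomial inequality in `v` alone, true for `0 < v ≤ 0.8`; and `v < 0.8` whenever `u < 0.36`.
-/

open Real

noncomputable section

def F (u v : ℝ) : ℝ := 4 * v ^ 2 * (u + v) - 2 * v ^ 2 * sin (2 * v) - u * π ^ 2 * sin v ^ 2

def curveV (u : ℝ) : ℝ := u * π / (u - π / 2 + √((u + π / 2) ^ 2 + 3.6))

end

def OnCurve (u v : ℝ) : Prop := u * π * (π - 2 * v) * (u + v) = 3.6 * v ^ 2

theorem F_lt {u v : ℝ} (hu : 0 ≤ u) (hv0 : 0 < v) (hv2 : v ≤ 2) :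
    F u v < v ^ 2 * (8 / 3 * v ^ 3 - u * (π ^ 2 * (1 - v ^ 2 / 6) ^ 2 - 4)) := by
  have hsin2v : 2 * v - (2 * v) ^ 3 / 6 < sin (2 * v) := sin_gt_sub_cube (by positivity)
  have hsinv : (v - v ^ 3 / 6) ^ 2 ≤ sin v ^ 2 :=
    pow_le_pow_left₀ (by nlinarith [mul_pos hv0 hv0]) (sin_gt_sub_cube hv0).le 2
  unfold F
  nlinarith [mul_lt_mul_of_pos_left hsin2v (by positivity : 0 < v ^ 2),
    mul_le_mul_of_nonneg_left hsinv (by positivity : 0 ≤ u * π ^ 2)]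

/-- `coeff_bound` with `π` replaced, in the unfavourable direction, using `9.85 < 3.14²` and
`3.15² < 9.93`. -/
theorem coeff_bound_numeric {v : ℝ} (hv0 : 0 ≤ v) (hv : v ≤ 0.8) :
    (9.93 - 6.28 * v) * (8 / 3 * v ^ 2) * (8 / 3 * v ^ 2 + (9.85 * (1 - v ^ 2 / 6) ^ 2 - 4)) <
      3.6 * (9.85 * (1 - v ^ 2 / 6) ^ 2 - 4) ^ 2 := by
  nlinarith [mul_nonneg hv0 hv0, mul_nonneg (sub_nonneg.2 hv) hv0, pow_nonneg hv0 3,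
    pow_nonneg hv0 4, mul_nonneg (mul_nonneg hv0 hv0) (sub_nonneg.2 hv),
    mul_nonneg (pow_nonneg hv0 3) (sub_nonneg.2 hv)]

theorem coeff_bound {v : ℝ} (hv0 : 0 ≤ v) (hv : v ≤ 0.8) :
    π * (π - 2 * v) * (8 / 3 * v ^ 2) * (8 / 3 * v ^ 2 + (π ^ 2 * (1 - v ^ 2 / 6) ^ 2 - 4)) <
      3.6 * (π ^ 2 * (1 - v ^ 2 / 6) ^ 2 - 4) ^ 2 := by
  have hpi1 := pi_gt_d2
  have hpi2 := pi_lt_d2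
  have key := coeff_bound_numeric hv0 hv
  have hw : 0.89 ≤ 1 - v ^ 2 / 6 := by nlinarith
  have ha : 8 / 3 * v ^ 2 ≤ 1.71 := by nlinarith
  have ha0 : 0 ≤ 8 / 3 * v ^ 2 := by positivity
  have hc : π * (π - 2 * v) ≤ 9.93 - 6.28 * v := by nlinarith
  have hc0 : 0 ≤ π * (π - 2 * v) := mul_nonneg pi_pos.le (by linarith)
  have hD : 9.85 * (1 - v ^ 2 / 6) ^ 2 - 4 ≤ π ^ 2 * (1 - v ^ 2 / 6) ^ 2 - 4 := by
    gcongr; nlinarith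
  have hD₀ : 3 < 9.85 * (1 - v ^ 2 / 6) ^ 2 - 4 := by nlinarith
  set a := 8 / 3 * v ^ 2
  set c := π * (π - 2 * v)
  set D₀ := 9.85 * (1 - v ^ 2 / 6) ^ 2 - 4
  set D := π ^ 2 * (1 - v ^ 2 / 6) ^ 2 - 4
  have hca : c * a ≤ 3.6 * (D + D₀) := by nlinarith
  calc c * a * (a + D) = c * a * (a + D₀) + c * a * (D - D₀) := by ring
    _ ≤ (9.93 - 6.28 * v) * a * (a + D₀) + 3.6 * (D + D₀) * (D - D₀) := by gcongr
    _ < 3.6 * D₀ ^ 2 + 3.6 * (D + D₀) * (D - D₀) := by linarith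
    _ = 3.6 * D ^ 2 := by ring

theorem OnCurve.cube_lt {u v : ℝ} (h : OnCurve u v) (hu : 0 < u) (hv0 : 0 < v) (hv : v ≤ 0.8) :
    8 / 3 * v ^ 3 < u * (π ^ 2 * (1 - v ^ 2 / 6) ^ 2 - 4) := by
  have hD : 0 < π ^ 2 * (1 - v ^ 2 / 6) ^ 2 - 4 := by
    have : 9.85 * 0.89 ^ 2 - 4 ≤ π ^ 2 * (1 - v ^ 2 / 6) ^ 2 - 4 := by
      gcongr
      · nlinarith [pi_gt_d2]
      · nlinarith
    linarith
  set D := π ^ 2 * (1 - v ^ 2 / 6) ^ 2 - 4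
  have hc : 0 < π * (π - 2 * v) := mul_pos pi_pos (by linarith [pi_gt_d2])
  by_contra! huD
  have : v ^ 2 * (3.6 * D ^ 2) ≤ v ^ 2 * (π * (π - 2 * v) * (8 / 3 * v ^ 2) * (8 / 3 * v ^ 2 + D)) :=
    calc v ^ 2 * (3.6 * D ^ 2) = π * (π - 2 * v) * (u * D) * (u * D + v * D) := by
          unfold OnCurve at h; linear_combination -D ^ 2 * h
      _ ≤ π * (π - 2 * v) * (8 / 3 * v ^ 3) * (8 / 3 * v ^ 3 + v * D) := by gcongr
      _ = _ := by ring
  exact (le_of_mul_le_mul_left this (by positivity)).not_gt (coeff_bound hv0.le hv)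

theorem curveV_den_gt {u : ℝ} (hu : 0 ≤ u) : 2 * u < u - π / 2 + √((u + π / 2) ^ 2 + 3.6) := by
  have : u + π / 2 < √((u + π / 2) ^ 2 + 3.6) := (lt_sqrt (by positivity)).2 (by linarith)
  linarith

theorem curveV_pos {u : ℝ} (hu : 0 < u) : 0 < curveV u :=
  div_pos (by positivity) (by linarith [curveV_den_gt hu.le])

theorem curveV_lt {u : ℝ} (hu0 : 0 ≤ u) (hu1 : u < 0.36) : curveV u < 0.8 := by
  have hs : 3 * u + π / 2 < √((u + π / 2) ^ 2 + 3.6) :=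
    (lt_sqrt (by positivity)).2 (by nlinarith [pi_lt_d2])
  rw [curveV, div_lt_iff₀ (by linarith [curveV_den_gt hu0])]
  nlinarith [pi_lt_d2]

theorem onCurve_curveV {u : ℝ} (hu : 0 ≤ u) : OnCurve u (curveV u) := by
  have hden := curveV_den_gt hu
  set s := √((u + π / 2) ^ 2 + 3.6)
  have hs : s ^ 2 = (u + π / 2) ^ 2 + 3.6 := sq_sqrt (by positivity)
  have hv : curveV u * (u - π / 2 + s) = u * π :=
    div_mul_cancel₀ _ (by linarith : 0 < u - π / 2 + s).ne'
  unfold OnCurve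
  linear_combination (-(u * π - curveV u * (u - π / 2) + curveV u * s)) * hv + curveV u ^ 2 * hs

theorem F_neg_on_curve (u : ℝ) (hu : u ∈ Set.Ioo (0 : ℝ) 0.36) :
    let v := u * π / (u - π / 2 + Real.sqrt ((u + π / 2) ^ 2 + 3.6))
    4 * v ^ 2 * (u + v) - 2 * v ^ 2 * Real.sin (2 * v) - u * π ^ 2 * Real.sin v ^ 2 < 0 := by
  obtain ⟨hu0, hu1⟩ := hu
  have hv0 := curveV_pos hu0
  have hv := curveV_lt hu0.le hu1
  have hgap := (onCurve_curveV hu0.le).cube_lt hu0 hv0 hv.le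
  change F u (curveV u) < 0
  calc F u (curveV u) < _ := F_lt hu0.le hv0 (by linarith)
    _ < 0 := mul_neg_of_pos_of_neg (by positivity) (by linarith)
end
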